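/- Let G ⊆ H be two hypothesis classes of Littlestone dimension at most d, and let p ∈ ℕ. Then DDim_{2p,d}(G) ≤ DDim_{p,d}(H). -/

import Mathlib

open scoped Classical

universe u

variable {X : Type u}

/-- Restriction of a hypothesis class to hypotheses labelling `x` with `y`. -/
def restrict (H : Set (X → Bool)) (x : X) (y : Bool) : Set (X → Bool) :=
  {h ∈ H | h x = y}

/-- Restriction along a sequence of labelled examples. -/
def restrictSeq (H : Set (X → Bool)) : List (X × Bool) → Set (X → Bool)
  | [] => H
  | (x, y) :: rest => restrictSeq (restrict H x y) rest

/-- `Shatters H d` : `H` shatters a complete mistake tree of depth `d`. -/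
def Shatters (H : Set (X → Bool)) : ℕ → Prop
  | 0 => H.Nonempty
  | d + 1 => ∃ x : X, Shatters (restrict H x false) d ∧ Shatters (restrict H x true) d

/-- The Littlestone dimension, with value `⊥` for the empty class
(the usual `-1` convention) and `⊤` for infinite dimension. -/
noncomputable def LDim (H : Set (X → Bool)) : WithBot ℕ∞ :=
  sSup {e : WithBot ℕ∞ | ∃ n : ℕ, e = ((n : ℕ∞) : WithBot ℕ∞) ∧ Shatters H n}

/-- Littlestone dimension, truncated to a natural number. -/
noncomputable def ldimN (H : Set (X → Bool)) : ℕ :=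
  ((LDim H).unbotD 0).toNat

/-- The standard optimal algorithm of a class. -/
noncomputable def SOA (H : Set (X → Bool)) (x : X) : Bool :=
  if LDim (restrict H x false) = LDim H then false else true

/-- Restricting `H` along points `xs`, each labelled by `SOA H`. -/
noncomputable def soaChain (H : Set (X → Bool)) (xs : List X) : Set (X → Bool) :=
  restrictSeq H (xs.map fun x => (x, SOA H x))

/-- `H` is `k`-irreducible. -/
noncomputable def Irred (k : ℕ) (H : Set (X → Bool)) : Prop :=
  ∀ xs : List X, xs.length = k → LDim (soaChain H xs) = LDim H

/-- `H` is `k`-reducible. -/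
noncomputable def Reducible (k : ℕ) (H : Set (X → Bool)) : Prop :=
  ∃ xs : List X, xs.length = k ∧ LDim (soaChain H xs) < LDim H

-- basic lemmas
theorem restrict_subset (H : Set (X → Bool)) (x : X) (y : Bool) : restrict H x y ⊆ H :=
  fun _ h => h.1

theorem restrict_mono {G H : Set (X → Bool)} (h : G ⊆ H) (x : X) (y : Bool) :
    restrict G x y ⊆ restrict H x y := fun f hf => ⟨h hf.1, hf.2⟩

theorem restrictSeq_subset (s : List (X × Bool)) : ∀ H : Set (X → Bool), restrictSeq H s ⊆ H := by
  induction s with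
  | nil => intro H; exact fun _ h => h
  | cons a rest ih =>
    rintro H f hf
    exact restrict_subset H a.1 a.2 (ih _ hf)

theorem restrictSeq_mono (s : List (X × Bool)) : ∀ {G H : Set (X → Bool)}, G ⊆ H →
    restrictSeq G s ⊆ restrictSeq H s := by
  induction s with
  | nil => intro G H h; exact h
  | cons a rest ih => intro G H h; exact ih (restrict_mono h a.1 a.2)

theorem restrictSeq_append (s t : List (X × Bool)) : ∀ H : Set (X → Bool),
    restrictSeq H (s ++ t) = restrictSeq (restrictSeq H s) t := by
  induction s with
  | nil => intro H; rfl
  | cons a rest ih => intro H; obtain ⟨x, y⟩ := a; exact ih (restrict H x y)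

theorem shatters_mono : ∀ (n : ℕ) {G H : Set (X → Bool)}, G ⊆ H → Shatters G n → Shatters H n := by
  intro n
  induction n with
  | zero => intro G H h hs; exact hs.mono h
  | succ n ih =>
    rintro G H h ⟨x, h0, h1⟩
    exact ⟨x, ih (restrict_mono h x false) h0, ih (restrict_mono h x true) h1⟩

theorem shatters_succ : ∀ (n : ℕ) {H : Set (X → Bool)}, Shatters H (n + 1) → Shatters H n := by
  intro n
  induction n with
  | zero =>
    rintro H ⟨x, h0, _⟩
    exact h0.mono (restrict_subset H x false)
  | succ n ih =>
    rintro H ⟨x, h0, h1⟩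
    exact ⟨x, ih h0, ih h1⟩

theorem shatters_anti {H : Set (X → Bool)} {m n : ℕ} (hmn : m ≤ n) (h : Shatters H n) :
    Shatters H m := by
  induction hmn with
  | refl => exact h
  | step _ ih => exact ih (shatters_succ _ h)

theorem shatters_le_ldim {H : Set (X → Bool)} {n : ℕ} (h : Shatters H n) :
    ((n : ℕ∞) : WithBot ℕ∞) ≤ LDim H :=
  le_sSup ⟨n, rfl, h⟩

theorem ldim_mono {G H : Set (X → Bool)} (h : G ⊆ H) : LDim G ≤ LDim H := by
  apply sSup_le
  rintro e ⟨n, rfl, hs⟩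
  exact shatters_le_ldim (shatters_mono n h hs)

theorem restrict_empty (x : X) (y : Bool) : restrict (∅ : Set (X → Bool)) x y = ∅ := by
  ext f; simp [restrict]

theorem not_shatters_empty : ∀ n : ℕ, ¬ Shatters (∅ : Set (X → Bool)) n := by
  intro n
  induction n with
  | zero => rintro ⟨f, hf⟩; exact hf
  | succ n ih => rintro ⟨x, h0, _⟩; rw [restrict_empty] at h0; exact ih h0

theorem ldim_empty : LDim (∅ : Set (X → Bool)) = ⊥ := by
  rw [LDim]
  convert WithBot.sSup_empty (α := ℕ∞)
  ext e
  simp only [Set.mem_setOf_eq, Set.mem_empty_iff_false, iff_false]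
  rintro ⟨n, _, hs⟩
  exact not_shatters_empty n hs

theorem nonempty_of_ldim {H : Set (X → Bool)} {n : ℕ}
    (h : ((n : ℕ∞) : WithBot ℕ∞) ≤ LDim H) : H.Nonempty := by
  by_contra hne
  rw [Set.not_nonempty_iff_eq_empty] at hne
  rw [hne, ldim_empty, le_bot_iff] at h
  exact (WithBot.coe_ne_bot) h

/-- Structure theorem: nonempty bounded classes have LDim a natural number attained. -/
theorem ldim_spec {H : Set (X → Bool)} {d : ℕ} (hne : H.Nonempty)
    (hd : LDim H ≤ ((d : ℕ∞) : WithBot ℕ∞)) :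
    LDim H = ((ldimN H : ℕ∞) : WithBot ℕ∞) ∧ Shatters H (ldimN H) ∧ ldimN H ≤ d := by
  have hbdd : ∀ n : ℕ, Shatters H n → n ≤ d := by
    intro n hs
    have := (shatters_le_ldim hs).trans hd
    rw [WithBot.coe_le_coe, Nat.cast_le] at this
    exact this
  set S : Set ℕ := {n | Shatters H n} with hS
  have h0 : 0 ∈ S := hne
  have hbd : BddAbove S := ⟨d, fun n hn => hbdd n hn⟩
  have hmem : sSup S ∈ S := Nat.sSup_mem ⟨0, h0⟩ hbd
  have hldim : LDim H = (((sSup S : ℕ) : ℕ∞) : WithBot ℕ∞) := by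
    apply le_antisymm
    · apply sSup_le
      rintro e ⟨n, rfl, hs⟩
      rw [WithBot.coe_le_coe, Nat.cast_le]
      exact le_csSup hbd hs
    · exact shatters_le_ldim hmem
  have hln : ldimN H = sSup S := by
    rw [ldimN, hldim]
    simp
  rw [hln]
  exact ⟨hldim, hmem, hbdd _ hmem⟩

theorem ldimN_le_d {H : Set (X → Bool)} {d : ℕ} (hd : LDim H ≤ ((d : ℕ∞) : WithBot ℕ∞)) :
    ldimN H ≤ d := by
  rcases Set.eq_empty_or_nonempty H with rfl | hne
  · simp [ldimN, ldim_empty]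
  · exact (ldim_spec hne hd).2.2

theorem ldimN_mono {G H : Set (X → Bool)} {d : ℕ} (hGH : G ⊆ H)
    (hd : LDim H ≤ ((d : ℕ∞) : WithBot ℕ∞)) : ldimN G ≤ ldimN H := by
  rcases Set.eq_empty_or_nonempty G with rfl | hne
  · simp [ldimN, ldim_empty]
  · have hG : LDim G ≤ ((d : ℕ∞) : WithBot ℕ∞) := (ldim_mono hGH).trans hd
    obtain ⟨hG1, -, -⟩ := ldim_spec hne hG
    obtain ⟨hH1, -, -⟩ := ldim_spec (hne.mono hGH) hd
    have := ldim_mono hGH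
    rw [hG1, hH1, WithBot.coe_le_coe, Nat.cast_le] at this
    exact this

theorem shatters_of_le_ldim {H : Set (X → Bool)} {d n : ℕ}
    (hd : LDim H ≤ ((d : ℕ∞) : WithBot ℕ∞))
    (h : ((n : ℕ∞) : WithBot ℕ∞) ≤ LDim H) : Shatters H n := by
  obtain ⟨h1, h2, -⟩ := ldim_spec (nonempty_of_ldim h) hd
  rw [h1, WithBot.coe_le_coe, Nat.cast_le] at h
  exact shatters_anti h h2

/-- Not both restrictions can keep the dimension. -/
theorem not_both_eq {H : Set (X → Bool)} {d : ℕ} {x : X}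
    (hd : LDim H ≤ ((d : ℕ∞) : WithBot ℕ∞)) (hne : H.Nonempty) :
    ¬ (LDim (restrict H x false) = LDim H ∧ LDim (restrict H x true) = LDim H) := by
  rintro ⟨h0, h1⟩
  obtain ⟨h1', h2', -⟩ := ldim_spec hne hd
  set e := ldimN H
  have hs0 : Shatters (restrict H x false) e :=
    shatters_of_le_ldim ((ldim_mono (restrict_subset H x false)).trans hd)
      (by rw [h0, h1'])
  have hs1 : Shatters (restrict H x true) e :=
    shatters_of_le_ldim ((ldim_mono (restrict_subset H x true)).trans hd)
      (by rw [h1, h1'])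
  have hsh : Shatters H (e + 1) := ⟨x, hs0, hs1⟩
  have h := shatters_le_ldim hsh
  rw [h1', WithBot.coe_le_coe, Nat.cast_le] at h
  omega

/-- Restricting along the non-SOA label strictly decreases the dimension. -/
theorem soa_off_lt {H : Set (X → Bool)} {d : ℕ} (x : X)
    (hd : LDim H ≤ ((d : ℕ∞) : WithBot ℕ∞)) (hne : H.Nonempty) :
    LDim (restrict H x (!(SOA H x))) < LDim H := by
  have hkey := not_both_eq (x := x) hd hne
  rw [SOA]
  by_cases h0 : LDim (restrict H x false) = LDim H
  · simp only [h0, if_true, Bool.not_false]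
    refine lt_of_le_of_ne (ldim_mono (restrict_subset H x true)) ?_
    intro h1; exact hkey ⟨h0, h1⟩
  · simp only [h0, if_false, Bool.not_true]
    exact lt_of_le_of_ne (ldim_mono (restrict_subset H x false)) h0

/-- For a dimension-0 class, the SOA restriction is the class itself. -/
theorem soa_keep_zero {H : Set (X → Bool)}
    (h : LDim H = (((0 : ℕ) : ℕ∞) : WithBot ℕ∞)) (x : X) :
    restrict H x (SOA H x) = H := by
  have hne : H.Nonempty := nonempty_of_ldim (n := 0) h.ge
  have hns : ¬ Shatters H 1 := by
    intro hs
    have := shatters_le_ldim hs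
    rw [h] at this
    rw [WithBot.coe_le_coe, Nat.cast_le] at this
    omega
  rw [SOA]
  by_cases h0 : LDim (restrict H x false) = LDim H
  · simp only [h0, if_true]
    apply Set.Subset.antisymm (restrict_subset H x false)
    intro f hf
    refine ⟨hf, ?_⟩
    by_contra hfx
    have hfx : f x = true := by revert hfx; cases f x <;> simp
    have hne0 : (restrict H x false).Nonempty := nonempty_of_ldim (n := 0) (by rw [h0, h])
    exact hns ⟨x, hne0, ⟨f, hf, hfx⟩⟩
  · simp only [h0, if_false]
    apply Set.Subset.antisymm (restrict_subset H x true)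
    intro f hf
    refine ⟨hf, ?_⟩
    by_contra hfx
    have hfx : f x = false := by revert hfx; cases f x <;> simp
    apply h0
    apply le_antisymm (ldim_mono (restrict_subset H x false))
    rw [h]
    exact shatters_le_ldim (n := 0) ⟨f, hf, hfx⟩

theorem irred_of_zero {H : Set (X → Bool)} (k : ℕ)
    (h : LDim H = (((0 : ℕ) : ℕ∞) : WithBot ℕ∞)) : Irred k H := by
  have key : ∀ ys : List X, restrictSeq H (ys.map fun x => (x, SOA H x)) = H := by
    intro ys
    induction ys with
    | nil => rfl
    | cons x rest ih =>
      show restrictSeq (restrict H x (SOA H x)) _ = H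
      rw [soa_keep_zero h x]
      exact ih
  intro xs _
  rw [soaChain, key]

theorem restrictSeq_empty (s : List (X × Bool)) : restrictSeq (∅ : Set (X → Bool)) s = ∅ :=
  Set.eq_empty_of_subset_empty (restrictSeq_subset s ∅)

theorem irred_of_empty (k : ℕ) : Irred k (∅ : Set (X → Bool)) := by
  intro xs _
  rw [soaChain, restrictSeq_empty]

theorem soaChain_subset (H : Set (X → Bool)) (xs : List X) : soaChain H xs ⊆ H :=
  restrictSeq_subset _ H

theorem reducible_of_not_irred {H : Set (X → Bool)} {k : ℕ} (h : ¬ Irred k H) :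
    ∃ xs : List X, xs.length = k ∧ LDim (soaChain H xs) < LDim H := by
  rw [Irred] at h
  push_neg at h
  obtain ⟨xs, hlen, hne⟩ := h
  exact ⟨xs, hlen, lt_of_le_of_ne (ldim_mono (soaChain_subset H xs)) hne⟩

/-- Binary decomposition trees: internal nodes labelled by domain points. -/
inductive DTree (X : Type u) : Type u where
  | leaf : DTree X
  | node : X → DTree X → DTree X → DTree X

/-- The example-sequences of all leaves of a tree (below the prefix `pre`). -/
def DTree.leafPaths : DTree X → List (X × Bool) → List (List (X × Bool))
  | .leaf, pre => [pre]
  | .node x l r, pre => l.leafPaths (pre ++ [(x, false)]) ++ r.leafPaths (pre ++ [(x, true)])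

/-- The example-sequences of all nodes of a tree (below the prefix `pre`). -/
def DTree.nodePaths : DTree X → List (X × Bool) → List (List (X × Bool))
  | .leaf, pre => [pre]
  | .node x l r, pre =>
      pre :: (l.nodePaths (pre ++ [(x, false)]) ++ r.nodePaths (pre ++ [(x, true)]))

theorem leafPaths_pre (t : DTree X) : ∀ pre : List (X × Bool),
    t.leafPaths pre = (t.leafPaths []).map (pre ++ ·) := by
  induction t with
  | leaf => intro pre; simp [DTree.leafPaths]
  | node x l r ihl ihr =>
    intro pre
    rw [DTree.leafPaths, DTree.leafPaths, ihl, ihr, ihl ([] ++ [(x, false)]), ihr ([] ++ [(x, true)])]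
    simp [List.map_map, Function.comp_def, List.append_assoc]

theorem nodePaths_pre (t : DTree X) : ∀ pre : List (X × Bool),
    t.nodePaths pre = (t.nodePaths []).map (pre ++ ·) := by
  induction t with
  | leaf => intro pre; simp [DTree.nodePaths]
  | node x l r ihl ihr =>
    intro pre
    rw [DTree.nodePaths, DTree.nodePaths, ihl, ihr, ihl ([] ++ [(x, false)]), ihr ([] ++ [(x, true)])]
    simp [List.map_map, Function.comp_def, List.append_assoc]

theorem mem_leafPaths_node {x : X} {l r : DTree X} {u : List (X × Bool)} :
    u ∈ (DTree.node x l r).leafPaths [] ↔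
      (∃ v ∈ l.leafPaths [], u = (x, false) :: v) ∨
      (∃ v ∈ r.leafPaths [], u = (x, true) :: v) := by
  rw [DTree.leafPaths, List.mem_append, leafPaths_pre l, leafPaths_pre r]
  simp [eq_comm]

theorem mem_nodePaths_node {x : X} {l r : DTree X} {u : List (X × Bool)} :
    u ∈ (DTree.node x l r).nodePaths [] ↔ u = [] ∨
      (∃ v ∈ l.nodePaths [], u = (x, false) :: v) ∨
      (∃ v ∈ r.nodePaths [], u = (x, true) :: v) := by
  rw [DTree.nodePaths, List.mem_cons, List.mem_append, nodePaths_pre l, nodePaths_pre r]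
  simp [eq_comm]

theorem foldr_max_le {l : List ℕ} {m : ℕ} (h : ∀ a ∈ l, a ≤ m) : l.foldr max 0 ≤ m := by
  induction l with
  | nil => simp
  | cons a rest ih =>
    simp only [List.foldr_cons, max_le_iff]
    exact ⟨h a (by simp), ih fun b hb => h b (List.mem_cons_of_mem a hb)⟩

theorem le_foldr_max {l : List ℕ} {a : ℕ} (h : a ∈ l) : a ≤ l.foldr max 0 := by
  induction l with
  | nil => simp at h
  | cons b rest ih =>
    rcases List.mem_cons.1 h with rfl | h
    · simp
    · exact (ih h).trans (le_max_right _ _)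

/-- Grafting: replace every leaf of `t` (reached along path `pre`) by `f pre`. -/
def graft (f : List (X × Bool) → DTree X) : DTree X → List (X × Bool) → DTree X
  | .leaf, pre => f pre
  | .node x l r, pre => .node x (graft f l (pre ++ [(x, false)])) (graft f r (pre ++ [(x, true)]))

theorem graft_leafPaths (f : List (X × Bool) → DTree X) (t : DTree X) :
    ∀ pre, (graft f t pre).leafPaths pre = (t.leafPaths pre).flatMap fun s => (f s).leafPaths s := by
  induction t with
  | leaf => intro pre; simp [graft, DTree.leafPaths]
  | node x l r ihl ihr =>
    intro pre
    rw [graft, DTree.leafPaths, DTree.leafPaths, ihl, ihr]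
    exact (List.flatMap_append).symm

theorem graft_nodePaths (f : List (X × Bool) → DTree X) (t : DTree X) :
    ∀ pre u, u ∈ (graft f t pre).nodePaths pre →
      u ∈ t.nodePaths pre ∨ ∃ s ∈ t.leafPaths pre, u ∈ (f s).nodePaths s := by
  induction t with
  | leaf =>
    intro pre u hu
    exact Or.inr ⟨pre, by simp [DTree.leafPaths], hu⟩
  | node x l r ihl ihr =>
    intro pre u hu
    rw [graft, DTree.nodePaths] at hu
    rcases List.mem_cons.1 hu with rfl | hu
    · exact Or.inl (by rw [DTree.nodePaths]; exact List.mem_cons_self)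
    · rcases List.mem_append.1 hu with hu | hu
      · rcases ihl _ _ hu with h | ⟨s, hs, hus⟩
        · exact Or.inl (by rw [DTree.nodePaths]; exact List.mem_cons_of_mem _ (List.mem_append_left _ h))
        · exact Or.inr ⟨s, by rw [DTree.leafPaths]; exact List.mem_append_left _ hs, hus⟩
      · rcases ihr _ _ hu with h | ⟨s, hs, hus⟩
        · exact Or.inl (by rw [DTree.nodePaths]; exact List.mem_cons_of_mem _ (List.mem_append_right _ h))
        · exact Or.inr ⟨s, by rw [DTree.leafPaths]; exact List.mem_append_right _ hs, hus⟩

theorem irred_of_ldimN_zero {K : Set (X → Bool)} {d : ℕ}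
    (hd : LDim K ≤ ((d : ℕ∞) : WithBot ℕ∞)) (h0 : ldimN K = 0) (k : ℕ) : Irred k K := by
  rcases Set.eq_empty_or_nonempty K with rfl | hne
  · exact irred_of_empty k
  · obtain ⟨h1, -, -⟩ := ldim_spec hne hd
    rw [h0] at h1
    exact irred_of_zero k h1

theorem ldimN_lt {A K : Set (X → Bool)} {d : ℕ}
    (hd : LDim K ≤ ((d : ℕ∞) : WithBot ℕ∞)) (hA : LDim A < LDim K) (he : 1 ≤ ldimN K) :
    ldimN A < ldimN K := by
  have hKne : K.Nonempty := by
    rcases Set.eq_empty_or_nonempty K with rfl | hne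
    · rw [ldim_empty] at hA; exact absurd hA (not_lt_bot)
    · exact hne
  obtain ⟨hK1, -, -⟩ := ldim_spec hKne hd
  rcases Set.eq_empty_or_nonempty A with rfl | hAne
  · simpa [ldimN, ldim_empty, Nat.pos_iff_ne_zero, Nat.one_le_iff_ne_zero] using he
  · obtain ⟨hA1, -, -⟩ := ldim_spec hAne (hA.le.trans hd)
    rw [hA1, hK1, WithBot.coe_lt_coe, Nat.cast_lt] at hA
    exact hA

theorem chain_arith {q A B m : ℕ} (hA : 1 ≤ A) (h2 : 2 * A ≤ B) (hm : m ≤ q * A) :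
    q * (A - 1) + m ≤ q * (B - 1) := by
  have h1 : q * (A - 1) + q * A = q * (2 * A - 1) := by rw [← Nat.mul_add]; congr 1; omega
  have h3 : q * (2 * A - 1) ≤ q * (B - 1) := Nat.mul_le_mul_left _ (by omega)
  omega

theorem pow_sub_mono {d e e' : ℕ} (hed : e ≤ d) (he' : e' < e) :
    2 * 2 ^ (d - e) ≤ 2 ^ (d - e') := by
  have : d - e + 1 ≤ d - e' := by omega
  calc 2 * 2 ^ (d - e) = 2 ^ (d - e + 1) := by rw [pow_succ]; ring
  _ ≤ 2 ^ (d - e') := Nat.pow_le_pow_right (by norm_num) this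

theorem restrictSeq_snoc (K : Set (X → Bool)) (pre : List (X × Bool)) (z : X) (c : Bool) :
    restrictSeq K (pre ++ [(z, c)]) = restrict (restrictSeq K pre) z c := by
  rw [restrictSeq_append]; rfl

/-- Main construction: a valid decomposition subtree below any class. -/
theorem build (q d : ℕ) : ∀ (n : ℕ) (K : Set (X → Bool)),
    LDim K ≤ ((d : ℕ∞) : WithBot ℕ∞) → ldimN K ≤ n →
    ∃ tr : DTree X,
      (∀ u ∈ tr.nodePaths ([] : List (X × Bool)),
        q * (2 ^ (d - ldimN K) - 1) + u.length ≤
          q * (2 ^ (d - ldimN (restrictSeq K u) + 1) - 1)) ∧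
      (∀ u ∈ tr.leafPaths ([] : List (X × Bool)),
        q * (2 ^ (d - ldimN K) - 1) + u.length ≤ q * (2 ^ (d - ldimN (restrictSeq K u)) - 1) ∧
        Irred (q * 2 ^ (d - ldimN (restrictSeq K u))) (restrictSeq K u) ∧
        ldimN (restrictSeq K u) ≤ ldimN K) := by
  intro n
  induction n with
  | zero =>
    intro K hd hn
    refine ⟨DTree.leaf, ?_, ?_⟩ <;> intro u hu <;>
      simp only [DTree.nodePaths, DTree.leafPaths, List.mem_singleton] at hu <;> subst hu
    · show q * (2 ^ (d - ldimN K) - 1) + 0 ≤ q * (2 ^ (d - ldimN K + 1) - 1)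
      have : 2 ^ (d - ldimN K) ≤ 2 ^ (d - ldimN K + 1) := Nat.pow_le_pow_right (by norm_num) (by omega)
      have := Nat.mul_le_mul_left q (show 2 ^ (d - ldimN K) - 1 ≤ 2 ^ (d - ldimN K + 1) - 1 by omega)
      omega
    · exact ⟨by show q * (2 ^ (d - ldimN K) - 1) + 0 ≤ q * (2 ^ (d - ldimN K) - 1); omega, irred_of_ldimN_zero hd (Nat.le_zero.1 hn) _, le_rfl⟩
  | succ n IH =>
    intro K hd hn
    by_cases hirr : Irred (q * 2 ^ (d - ldimN K)) K
    · refine ⟨DTree.leaf, ?_, ?_⟩ <;> intro u hu <;>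
        simp only [DTree.nodePaths, DTree.leafPaths, List.mem_singleton] at hu <;> subst hu
      · show q * (2 ^ (d - ldimN K) - 1) + 0 ≤ q * (2 ^ (d - ldimN K + 1) - 1)
        have : 2 ^ (d - ldimN K) ≤ 2 ^ (d - ldimN K + 1) := Nat.pow_le_pow_right (by norm_num) (by omega)
        have := Nat.mul_le_mul_left q (show 2 ^ (d - ldimN K) - 1 ≤ 2 ^ (d - ldimN K + 1) - 1 by omega)
        omega
      · exact ⟨by show q * (2 ^ (d - ldimN K) - 1) + 0 ≤ q * (2 ^ (d - ldimN K) - 1); omega, hirr, le_rfl⟩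
    · -- reducible case
      set e := ldimN K with he_def
      have he1 : 1 ≤ e := by
        by_contra h
        exact hirr (irred_of_ldimN_zero hd (by omega) _)
      have hed : e ≤ d := ldimN_le_d hd
      obtain ⟨xs, hxslen, hxslt⟩ := reducible_of_not_irred hirr
      set k := q * 2 ^ (d - e) with hk_def
      set lab : X → X × Bool := fun x => (x, SOA K x) with hlab
      -- inner chain construction
      have chain : ∀ zs : List X, ∀ pre : List (X × Bool),
          pre ++ zs.map lab = xs.map lab →
          ∃ tr : DTree X,
            (∀ u ∈ tr.nodePaths ([] : List (X × Bool)),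
              q * (2 ^ (d - e) - 1) + pre.length + u.length ≤
                q * (2 ^ (d - ldimN (restrictSeq K (pre ++ u)) + 1) - 1)) ∧
            (∀ u ∈ tr.leafPaths ([] : List (X × Bool)),
              (q * (2 ^ (d - e) - 1) + pre.length + u.length ≤
                q * (2 ^ (d - ldimN (restrictSeq K (pre ++ u))) - 1)) ∧
              Irred (q * 2 ^ (d - ldimN (restrictSeq K (pre ++ u)))) (restrictSeq K (pre ++ u)) ∧
              ldimN (restrictSeq K (pre ++ u)) ≤ e) := by
        intro zs
        induction zs with
        | nil =>
          intro pre hfull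
          rw [List.map_nil, List.append_nil] at hfull
          -- the end of the chain: dimension has dropped
          have hlen : pre.length = k := by
            rw [hfull, List.length_map, hxslen]
          have hend : restrictSeq K pre = soaChain K xs := by rw [hfull]; rfl
          have hKd' : LDim (restrictSeq K pre) ≤ ((d : ℕ∞) : WithBot ℕ∞) :=
            (ldim_mono (restrictSeq_subset pre K)).trans hd
          have hlt : ldimN (restrictSeq K pre) < e := by
            rw [hend]
            exact ldimN_lt hd hxslt he1
          obtain ⟨tr, h1, h2⟩ := IH (restrictSeq K pre) hKd' (by omega)
          refine ⟨tr, ?_, ?_⟩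
          · intro u hu
            have := h1 u hu
            rw [restrictSeq_append]
            have harith : q * (2 ^ (d - e) - 1) + pre.length ≤
                q * (2 ^ (d - ldimN (restrictSeq K pre)) - 1) :=
              chain_arith (Nat.one_le_two_pow) (pow_sub_mono hed hlt) (by rw [← hk_def]; omega)
            omega
          · intro u hu
            obtain ⟨hb1, hb2, hb3⟩ := h2 u hu
            rw [restrictSeq_append]
            have harith : q * (2 ^ (d - e) - 1) + pre.length ≤
                q * (2 ^ (d - ldimN (restrictSeq K pre)) - 1) :=
              chain_arith (Nat.one_le_two_pow) (pow_sub_mono hed hlt) (by rw [← hk_def]; omega)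
            exact ⟨by omega, hb2, by omega⟩
        | cons z rest ihc =>
          intro pre hfull
          have hlen : pre.length + (rest.length + 1) = k := by
            have := congrArg List.length hfull
            simp only [List.length_append, List.length_map, List.length_cons] at this
            omega
          -- continue child
          have hfull' : (pre ++ [(z, SOA K z)]) ++ rest.map lab = xs.map lab := by
            rw [List.append_assoc]; exact hfull
          obtain ⟨tc, hc1, hc2⟩ := ihc (pre ++ [(z, SOA K z)]) hfull'
          -- off child
          have hKne : K.Nonempty := by
            rcases Set.eq_empty_or_nonempty K with rfl | hne
            · exact absurd (irred_of_empty _) hirr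
            · exact hne
          have hoff_lt : LDim (restrictSeq K (pre ++ [(z, !(SOA K z))])) < LDim K := by
            rw [restrictSeq_snoc]
            exact lt_of_le_of_lt
              (ldim_mono (restrict_mono (restrictSeq_subset pre K) z _))
              (soa_off_lt z hd hKne)
          have hoff_d : LDim (restrictSeq K (pre ++ [(z, !(SOA K z))])) ≤ ((d : ℕ∞) : WithBot ℕ∞) :=
            (ldim_mono (restrictSeq_subset _ K)).trans hd
          have hoff_dim : ldimN (restrictSeq K (pre ++ [(z, !(SOA K z))])) < e :=
            ldimN_lt hd hoff_lt he1
          obtain ⟨toff, ho1, ho2⟩ := IH (restrictSeq K (pre ++ [(z, !(SOA K z))])) hoff_d (by omega)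
          -- assemble
          set child : Bool → DTree X := fun c => if c = SOA K z then tc else toff with hchild
          have class_eq : ∀ (c : Bool) (v : List (X × Bool)),
              restrictSeq K (pre ++ (z, c) :: v) = restrictSeq K ((pre ++ [(z, c)]) ++ v) := by
            intro c v
            rw [List.append_assoc]
            rfl
          have side_node : ∀ (c : Bool) (v : List (X × Bool)), v ∈ (child c).nodePaths [] →
              q * (2 ^ (d - e) - 1) + pre.length + ((z, c) :: v).length ≤
                q * (2 ^ (d - ldimN (restrictSeq K (pre ++ (z, c) :: v)) + 1) - 1) := by
            intro c v hv
            rw [class_eq, List.length_cons]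
            by_cases hc : c = SOA K z
            · have hv' : v ∈ tc.nodePaths [] := by simpa [hchild, hc] using hv
              have := hc1 v hv'
              rw [List.length_append, List.length_singleton] at this
              rw [hc]
              omega
            · have hc' : c = !(SOA K z) := by
                revert hc; cases c <;> cases hSOA : SOA K z <;> simp
              have hv' : v ∈ toff.nodePaths [] := by simpa [hchild, hc] using hv
              have hmain := ho1 v hv'
              rw [← restrictSeq_append] at hmain
              rw [hc']
              have harith : q * (2 ^ (d - e) - 1) + (pre.length + 1) ≤
                  q * (2 ^ (d - ldimN (restrictSeq K (pre ++ [(z, !(SOA K z))]))) - 1) :=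
                chain_arith (Nat.one_le_two_pow) (pow_sub_mono hed hoff_dim)
                  (by rw [← hk_def]; omega)
              omega
          have side_leaf : ∀ (c : Bool) (v : List (X × Bool)), v ∈ (child c).leafPaths [] →
              (q * (2 ^ (d - e) - 1) + pre.length + ((z, c) :: v).length ≤
                q * (2 ^ (d - ldimN (restrictSeq K (pre ++ (z, c) :: v))) - 1)) ∧
              Irred (q * 2 ^ (d - ldimN (restrictSeq K (pre ++ (z, c) :: v))))
                (restrictSeq K (pre ++ (z, c) :: v)) ∧
              ldimN (restrictSeq K (pre ++ (z, c) :: v)) ≤ e := by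
            intro c v hv
            rw [class_eq, List.length_cons]
            by_cases hc : c = SOA K z
            · have hv' : v ∈ tc.leafPaths [] := by simpa [hchild, hc] using hv
              obtain ⟨hl1, hl2, hl3⟩ := hc2 v hv'
              rw [List.length_append, List.length_singleton] at hl1
              rw [hc]
              exact ⟨by omega, hl2, hl3⟩
            · have hc' : c = !(SOA K z) := by
                revert hc; cases c <;> cases hSOA : SOA K z <;> simp
              have hv' : v ∈ toff.leafPaths [] := by simpa [hchild, hc] using hv
              obtain ⟨hl1, hl2, hl3⟩ := ho2 v hv'
              rw [← restrictSeq_append] at hl1 hl2 hl3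
              rw [hc']
              have harith : q * (2 ^ (d - e) - 1) + (pre.length + 1) ≤
                  q * (2 ^ (d - ldimN (restrictSeq K (pre ++ [(z, !(SOA K z))]))) - 1) :=
                chain_arith (Nat.one_le_two_pow) (pow_sub_mono hed hoff_dim)
                  (by rw [← hk_def]; omega)
              exact ⟨by omega, hl2, by omega⟩
          refine ⟨DTree.node z (child false) (child true), ?_, ?_⟩
          · intro u hu
            rcases mem_nodePaths_node.1 hu with rfl | ⟨v, hv, rfl⟩ | ⟨v, hv, rfl⟩
            · -- the root node itself
              simp only [List.append_nil, List.length_nil, Nat.add_zero]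
              have hdim : ldimN (restrictSeq K pre) ≤ e :=
                ldimN_mono (restrictSeq_subset pre K) hd
              have harith : 2 * 2 ^ (d - e) ≤ 2 ^ (d - ldimN (restrictSeq K pre) + 1) := by
                have h2 : 2 ^ (d - e) ≤ 2 ^ (d - ldimN (restrictSeq K pre)) :=
                  Nat.pow_le_pow_right (by norm_num) (by omega)
                rw [pow_succ]
                omega
              exact chain_arith (Nat.one_le_two_pow) harith (by rw [← hk_def]; omega)
            · exact side_node false v hv
            · exact side_node true v hv
          · intro u hu
            rcases mem_leafPaths_node.1 hu with ⟨v, hv, rfl⟩ | ⟨v, hv, rfl⟩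
            · exact side_leaf false v hv
            · exact side_leaf true v hv
      obtain ⟨tr, h1, h2⟩ := chain xs [] (by simp)
      refine ⟨tr, ?_, ?_⟩
      · intro u hu
        have := h1 u hu
        simpa using this
      · intro u hu
        have := h2 u hu
        simpa using this

/-- Validity of a `(p,d)`-decomposition tree of `H`. -/
noncomputable def ValidTree (p d : ℕ) (H : Set (X → Bool)) (t : DTree X) : Prop :=
  (∀ s ∈ t.nodePaths [], s.length ≤ p * (2 ^ (d - ldimN (restrictSeq H s) + 1) - 1)) ∧
  (∀ s ∈ t.leafPaths [], s.length ≤ p * (2 ^ (d - ldimN (restrictSeq H s)) - 1) ∧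
    Irred (p * 2 ^ (d - ldimN (restrictSeq H s))) (restrictSeq H s))

/-- The degree of a decomposition tree: the largest leaf Littlestone dimension. -/
noncomputable def degree (H : Set (X → Bool)) (t : DTree X) : ℕ :=
  ((t.leafPaths []).map fun s => ldimN (restrictSeq H s)).foldr max 0

/-- The `(p,d)`-decomposition dimension of `H`. -/
noncomputable def DDim (p d : ℕ) (H : Set (X → Bool)) : ℕ :=
  sInf {t : ℕ | ∃ tr : DTree X, ValidTree p d H tr ∧ degree H tr = t}

/-- An optimal `(p,d)`-decomposition tree of `H`. -/
noncomputable def OptimalTree (p d : ℕ) (H : Set (X → Bool)) (tr : DTree X) : Prop :=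
  ValidTree p d H tr ∧ degree H tr = DDim p d H

/-- `f` is `(p,d)`-essential to `H`: it arises as the `SOA` of a leaf of maximal
dimension in every optimal `(p,d)`-decomposition of `H`. -/
noncomputable def Essential (p d : ℕ) (H : Set (X → Bool)) (f : X → Bool) : Prop :=
  ∀ tr : DTree X, OptimalTree p d H tr →
    ∃ s ∈ tr.leafPaths [], ldimN (restrictSeq H s) = DDim p d H ∧ SOA (restrictSeq H s) = f

/-- for `G ⊆ H` of Littlestone dimension at most `d`,
`DDim_{2p,d}(G) ≤ DDim_{p,d}(H)`. -/
theorem ddim_subset_le (G H : Set (X → Bool)) (hGH : G ⊆ H) (p d : ℕ)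
    (hG : LDim G ≤ ((d : ℕ∞) : WithBot ℕ∞)) (hH : LDim H ≤ ((d : ℕ∞) : WithBot ℕ∞)) :
    DDim (2 * p) d G ≤ DDim p d H := by
  classical
  have hHd : ∀ s : List (X × Bool), LDim (restrictSeq H s) ≤ ((d : ℕ∞) : WithBot ℕ∞) :=
    fun s => (ldim_mono (restrictSeq_subset s H)).trans hH
  have hGd : ∀ s : List (X × Bool), LDim (restrictSeq G s) ≤ ((d : ℕ∞) : WithBot ℕ∞) :=
    fun s => (ldim_mono (restrictSeq_subset s G)).trans hG
  have hGHdim : ∀ s : List (X × Bool), ldimN (restrictSeq G s) ≤ ldimN (restrictSeq H s) :=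
    fun s => ldimN_mono (restrictSeq_mono s hGH) (hHd s)
  -- `H` admits a valid tree, hence an optimal one
  have hHex : ∃ tr : DTree X, ValidTree p d H tr := by
    obtain ⟨tr, h1, h2⟩ := build p d (ldimN H) H hH le_rfl
    refine ⟨tr, fun s hs => le_trans (Nat.le_add_left _ _) (h1 s hs), fun s hs => ?_⟩
    obtain ⟨a, b, -⟩ := h2 s hs
    exact ⟨le_trans (Nat.le_add_left _ _) a, b⟩
  have hSne : {t : ℕ | ∃ tr : DTree X, ValidTree p d H tr ∧ degree H tr = t}.Nonempty :=
    ⟨degree H hHex.choose, hHex.choose, hHex.choose_spec, rfl⟩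
  obtain ⟨T, hTvalid, hTdeg⟩ := Nat.sInf_mem hSne
  -- build subtrees below every leaf of `T` for `G`
  have hbuild := fun s : List (X × Bool) =>
    build (2 * p) d (ldimN (restrictSeq G s)) (restrictSeq G s) (hGd s) le_rfl
  choose f hf1 hf2 using hbuild
  set tr := graft f T [] with htr
  -- depth budget at each leaf of `T`
  have hleafbud : ∀ s ∈ T.leafPaths ([] : List (X × Bool)),
      s.length ≤ 2 * p * (2 ^ (d - ldimN (restrictSeq G s)) - 1) := by
    intro s hs
    have h1 := (hTvalid.2 s hs).1
    have hpow : 2 ^ (d - ldimN (restrictSeq H s)) ≤ 2 ^ (d - ldimN (restrictSeq G s)) :=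
      Nat.pow_le_pow_right (by norm_num) (by have := hGHdim s; omega)
    calc s.length ≤ p * (2 ^ (d - ldimN (restrictSeq H s)) - 1) := h1
      _ ≤ 2 * p * (2 ^ (d - ldimN (restrictSeq G s)) - 1) :=
        Nat.mul_le_mul (by omega) (by omega)
  have hvalid : ValidTree (2 * p) d G tr := by
    constructor
    · intro u hu
      rcases graft_nodePaths f T [] u hu with hu | ⟨s, hs, hus⟩
      · have h1 := hTvalid.1 u hu
        have hpow : 2 ^ (d - ldimN (restrictSeq H u) + 1) ≤ 2 ^ (d - ldimN (restrictSeq G u) + 1) :=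
          Nat.pow_le_pow_right (by norm_num) (by have := hGHdim u; omega)
        calc u.length ≤ p * (2 ^ (d - ldimN (restrictSeq H u) + 1) - 1) := h1
          _ ≤ 2 * p * (2 ^ (d - ldimN (restrictSeq G u) + 1) - 1) :=
            Nat.mul_le_mul (by omega) (by omega)
      · rw [nodePaths_pre] at hus
        obtain ⟨v, hv, rfl⟩ := List.mem_map.1 hus
        have hmain := hf1 s v hv
        rw [← restrictSeq_append] at hmain
        have hsl := hleafbud s hs
        rw [List.length_append]
        omega
    · intro u hu
      rw [htr, graft_leafPaths] at hu
      obtain ⟨s, hs, hus⟩ := List.mem_flatMap.1 hu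
      rw [leafPaths_pre] at hus
      obtain ⟨v, hv, rfl⟩ := List.mem_map.1 hus
      obtain ⟨hl1, hl2, -⟩ := hf2 s v hv
      rw [← restrictSeq_append] at hl1 hl2
      have hsl := hleafbud s hs
      rw [List.length_append]
      exact ⟨by omega, hl2⟩
  have hdeg : degree G tr ≤ degree H T := by
    apply foldr_max_le
    intro a ha
    obtain ⟨u, hu, rfl⟩ := List.mem_map.1 ha
    rw [htr, graft_leafPaths] at hu
    obtain ⟨s, hs, hus⟩ := List.mem_flatMap.1 hu
    rw [leafPaths_pre] at hus
    obtain ⟨v, hv, rfl⟩ := List.mem_map.1 hus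
    obtain ⟨-, -, hl3⟩ := hf2 s v hv
    rw [← restrictSeq_append] at hl3
    have hsd : ldimN (restrictSeq H s) ≤ degree H T :=
      le_foldr_max (List.mem_map_of_mem hs)
    have := hGHdim s
    omega
  calc DDim (2 * p) d G ≤ degree G tr := Nat.sInf_le ⟨tr, hvalid, rfl⟩
    _ ≤ degree H T := hdeg
    _ = DDim p d H := hTdeg
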